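/- Let γ ∈ (0,1) and let P, P̂ ∈ ℝ^{D×D} be row-stochastic matrices such that ||(P̂ − P)v||_∞ ≤ ((1−γ)/√2)·||v||_∞ for every v ∈ ℝ^D. Set A := I − γP and Â := I − γP̂. Then for every positive semidefinite matrix M ∈ ℝ^{D×D}: ||(A^{-1} − Â^{-1}) M A^{-⊤}||_diag ≤ (1/√2)·||A^{-1} M A^{-⊤}||_diag. -/

import Mathlib

/-! Write `N := A⁻¹ M A⁻ᵀ`. The resolvent identity gives
`(A⁻¹ - Â⁻¹) M A⁻ᵀ = Â⁻¹ (γ (P - P̂)) N`. A row-stochastic matrix is a contraction for the sup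
norm, so `‖Â y‖_∞ ≥ (1 - γ) ‖y‖_∞` and hence `‖Â⁻¹ w‖_∞ ≤ ‖w‖_∞ / (1 - γ)`; and every entry of
the positive semidefinite `N` is bounded by its largest diagonal entry. Applied to the `i`-th
column of `N`, this bounds the `i`-th diagonal entry by
`γ / (1 - γ) · (1 - γ) / √2 · ‖N‖_diag ≤ ‖N‖_diag / √2`. -/

open Finset Matrix

noncomputable section

/-- A matrix is row-stochastic if its entries are nonnegative and its rows sum to one. -/
def RowStochastic {D : ℕ} (P : Matrix (Fin D) (Fin D) ℝ) : Prop :=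
  (∀ i j, 0 ≤ P i j) ∧ (∀ i, ∑ j, P i j = 1)

/-- `‖A‖_diag`: the maximum absolute diagonal entry of a square matrix. -/
def diagNorm {D : ℕ} (A : Matrix (Fin D) (Fin D) ℝ) : ℝ := ⨆ i, |A i i|

namespace Matrix

theorem mul_apply_eq_mulVec_col {l m n α : Type*} [Fintype m] [NonUnitalNonAssocSemiring α]
    (A : Matrix l m α) (B : Matrix m n α) (i : l) (k : n) : (A * B) i k = (A *ᵥ B.col k) i :=
  rfl

theorem col_mul {l m n α : Type*} [Fintype m] [NonUnitalNonAssocSemiring α]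
    (A : Matrix l m α) (B : Matrix m n α) (k : n) : (A * B).col k = A *ᵥ B.col k :=
  rfl

variable {n : Type*} [Fintype n]

theorem PosSemidef.abs_apply_le {N : Matrix n n ℝ} (hN : N.PosSemidef) (i j : n) :
    |N i j| ≤ (N i i + N j j) / 2 := by
  classical
  have hquad : ∀ c : ℝ, 0 ≤ N i i + c * N i j + c * N j i + c * c * N j j := fun c => by
    have h := hN.dotProduct_mulVec_nonneg (Pi.single i 1 + Pi.single j c)
    simp only [star_trivial, mulVec_add, mulVec_single, MulOpposite.op_one, one_smul,
      op_smul_eq_smul, dotProduct_add, add_dotProduct, single_dotProduct, col_apply, one_mul,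
      dotProduct_smul, smul_eq_mul] at h
    linarith
  have hsymm : N j i = N i j := hN.1.apply i j
  have hplus := hquad 1
  have hminus := hquad (-1)
  rw [hsymm] at hplus hminus
  rw [abs_le]
  constructor <;> linarith

variable [DecidableEq n] {A : Matrix n n ℝ} {c : ℝ}

theorem isUnit_of_mul_norm_le_norm_mulVec (hc : 0 < c) (h : ∀ y, c * ‖y‖ ≤ ‖A *ᵥ y‖) :
    IsUnit A := by
  rw [isUnit_iff_isUnit_det, isUnit_iff_ne_zero]
  intro hdet
  obtain ⟨v, hv0, hv⟩ := exists_mulVec_eq_zero_iff.mpr hdet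
  have := h v
  rw [hv, norm_zero] at this
  exact (mul_pos hc (norm_pos_iff.mpr hv0)).not_ge this

theorem mul_norm_inv_mulVec_le (h : ∀ y, c * ‖y‖ ≤ ‖A *ᵥ y‖) (hA : IsUnit A) (w : n → ℝ) :
    c * ‖A⁻¹ *ᵥ w‖ ≤ ‖w‖ := by
  simpa only [mulVec_mulVec, mul_nonsing_inv A ((isUnit_iff_isUnit_det A).mp hA), one_mulVec]
    using h (A⁻¹ *ᵥ w)

theorem mul_abs_inv_mul_apply_le (h : ∀ y, c * ‖y‖ ≤ ‖A *ᵥ y‖) (hA : IsUnit A) (hc : 0 ≤ c)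
    (B : Matrix n n ℝ) (i k : n) : c * |(A⁻¹ * B) i k| ≤ ‖B.col k‖ := by
  rw [mul_apply_eq_mulVec_col, ← Real.norm_eq_abs]
  exact (mul_le_mul_of_nonneg_left (norm_le_pi_norm _ i) hc).trans
    (mul_norm_inv_mulVec_le h hA _)

end Matrix

section DiagNorm

variable {D : ℕ}

theorem abs_apply_le_diagNorm (A : Matrix (Fin D) (Fin D) ℝ) (i : Fin D) :
    |A i i| ≤ diagNorm A :=
  le_ciSup (f := fun i => |A i i|) (Set.finite_range _).bddAbove i

theorem diagNorm_nonneg (A : Matrix (Fin D) (Fin D) ℝ) : 0 ≤ diagNorm A :=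
  Real.iSup_nonneg fun _ => abs_nonneg _

theorem diagNorm_le {A : Matrix (Fin D) (Fin D) ℝ} {c : ℝ} (hc : 0 ≤ c)
    (h : ∀ i, |A i i| ≤ c) : diagNorm A ≤ c :=
  Real.iSup_le h hc

theorem Matrix.PosSemidef.norm_col_le_diagNorm {N : Matrix (Fin D) (Fin D) ℝ}
    (hN : N.PosSemidef) (i : Fin D) : ‖N.col i‖ ≤ diagNorm N := by
  refine (pi_norm_le_iff_of_nonneg (diagNorm_nonneg N)).mpr fun j => ?_
  rw [Real.norm_eq_abs, col_apply]
  refine (hN.abs_apply_le j i).trans ?_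
  linarith [(le_abs_self (N j j)).trans (abs_apply_le_diagNorm N j),
    (le_abs_self (N i i)).trans (abs_apply_le_diagNorm N i)]

end DiagNorm

namespace RowStochastic

variable {D : ℕ} {P : Matrix (Fin D) (Fin D) ℝ}

theorem norm_mulVec_le (hP : RowStochastic P) (v : Fin D → ℝ) : ‖P *ᵥ v‖ ≤ ‖v‖ := by
  refine (pi_norm_le_iff_of_nonneg (norm_nonneg v)).mpr fun i => ?_
  calc ‖(P *ᵥ v) i‖ = ‖∑ j, P i j * v j‖ := rfl
    _ ≤ ∑ j, ‖P i j * v j‖ := norm_sum_le _ _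
    _ ≤ ∑ j, P i j * ‖v‖ := Finset.sum_le_sum fun j _ => by
        rw [norm_mul, Real.norm_of_nonneg (hP.1 i j)]
        exact mul_le_mul_of_nonneg_left (norm_le_pi_norm v j) (hP.1 i j)
    _ = ‖v‖ := by rw [← Finset.sum_mul, hP.2 i, one_mul]

theorem mul_norm_le_norm_one_sub_smul_mulVec (hP : RowStochastic P) (γ : ℝ) (y : Fin D → ℝ) :
    (1 - |γ|) * ‖y‖ ≤ ‖(1 - γ • P) *ᵥ y‖ := by
  have hsmul : ‖γ • (P *ᵥ y)‖ ≤ |γ| * ‖y‖ := by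
    rw [norm_smul, Real.norm_eq_abs]
    exact mul_le_mul_of_nonneg_left (hP.norm_mulVec_le y) (abs_nonneg γ)
  rw [sub_mulVec, one_mulVec, smul_mulVec]
  linarith [norm_sub_norm_le y (γ • (P *ᵥ y))]

end RowStochastic

/-- **Lemma (Statement 19).** If `P̂` is row-stochastic with `‖(P̂ - P)v‖_∞ ≤ ((1-γ)/√2)‖v‖_∞`
for all `v`, then with `A = I - γP` and `Â = I - γP̂`, for every PSD matrix `M`,
`‖(A⁻¹ - Â⁻¹) M A⁻ᵀ‖_diag ≤ (1/√2)·‖A⁻¹ M A⁻ᵀ‖_diag`. -/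
theorem perturbed_inverse_diag_bound
    {D : ℕ} (γ : ℝ) (hγ : γ ∈ Set.Ioo (0 : ℝ) 1)
    (P Phat : Matrix (Fin D) (Fin D) ℝ)
    (hP : RowStochastic P) (hPhat : RowStochastic Phat)
    (hpert : ∀ v : Fin D → ℝ, ‖(Phat - P).mulVec v‖ ≤ (1 - γ) / Real.sqrt 2 * ‖v‖)
    (M : Matrix (Fin D) (Fin D) ℝ) (hM : M.PosSemidef) :
    diagNorm (((1 - γ • P)⁻¹ - (1 - γ • Phat)⁻¹) * M * ((1 - γ • P)⁻¹)ᵀ) ≤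
      (1 / Real.sqrt 2) * diagNorm ((1 - γ • P)⁻¹ * M * ((1 - γ • P)⁻¹)ᵀ) := by
  obtain ⟨hγ0, hγ1⟩ := hγ
  have hgap : 0 < 1 - |γ| := by rw [abs_of_pos hγ0]; linarith
  have hA := isUnit_of_mul_norm_le_norm_mulVec hgap (hP.mul_norm_le_norm_one_sub_smul_mulVec γ)
  have hAhat := isUnit_of_mul_norm_le_norm_mulVec hgap
    (hPhat.mul_norm_le_norm_one_sub_smul_mulVec γ)
  have hresolvent : (1 - γ • P)⁻¹ - (1 - γ • Phat)⁻¹ =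
      (1 - γ • Phat)⁻¹ * (γ • (P - Phat)) * (1 - γ • P)⁻¹ := by
    rw [← neg_sub, inv_sub_inv (iff_of_true hAhat hA), ← neg_mul, ← mul_neg, neg_sub,
      sub_sub_sub_cancel_left, smul_sub]
  set N := (1 - γ • P)⁻¹ * M * ((1 - γ • P)⁻¹)ᵀ
  have hN : N.PosSemidef := by
    simpa only [conjTranspose_eq_transpose_of_trivial] using hM.mul_mul_conjTranspose_same _
  have hdiff : ((1 - γ • P)⁻¹ - (1 - γ • Phat)⁻¹) * M * ((1 - γ • P)⁻¹)ᵀ =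
      (1 - γ • Phat)⁻¹ * (γ • (P - Phat) * N) := by
    simp only [hresolvent, N, Matrix.mul_assoc]
  rw [hdiff]
  have hd : 0 ≤ 1 / Real.sqrt 2 * diagNorm N := mul_nonneg (by positivity) (diagNorm_nonneg N)
  refine diagNorm_le hd fun i => le_of_mul_le_mul_left ?_ (sub_pos.mpr hγ1)
  calc (1 - γ) * |((1 - γ • Phat)⁻¹ * (γ • (P - Phat) * N)) i i|
      ≤ ‖(γ • (P - Phat) * N).col i‖ := by
        simpa only [abs_of_pos hγ0] using mul_abs_inv_mul_apply_le
          (hPhat.mul_norm_le_norm_one_sub_smul_mulVec γ) hAhat hgap.le _ i i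
    _ = γ * ‖(Phat - P) *ᵥ N.col i‖ := by
        rw [col_mul, smul_mulVec, norm_smul, ← neg_sub Phat P, neg_mulVec, norm_neg,
          Real.norm_of_nonneg hγ0.le]
    _ ≤ γ * ((1 - γ) / Real.sqrt 2 * diagNorm N) := by
        gcongr
        exact (hpert _).trans (by gcongr; exact hN.norm_col_le_diagNorm i)
    _ = (1 - γ) * (γ * (1 / Real.sqrt 2 * diagNorm N)) := by ring
    _ ≤ (1 - γ) * (1 / Real.sqrt 2 * diagNorm N) :=
        mul_le_mul_of_nonneg_left (mul_le_of_le_one_left hd hγ1.le) (by linarith)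

end
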